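/- arXiv:1407.3774 — 6 statements merged into one kernel-verified Lean document; each statement's English description precedes it below -/
import Mathlib

section
/- For real numbers a, b ∈ (-1, -1/2) and any s₁, s₂ ∈ ℝ, the Lebesgue integral over u ∈ ℝ of (s₁-u)₊^a · (s₂-u)₊^b equals (s₂-s₁)₊^{a+b+1} · B(a+1, -a-b-1) + (s₁-s₂)₊^{a+b+1} · B(b+1, -a-b-1), where x₊ = max(x,0) and 0 raised to a negative power is interpreted as 0 on the set where the integrand vanishes. -/
/-!
For `s₁ < s₂` the integrand vanishes unless `u < s₁`, and the substitution
`u = s₁ - (s₂ - s₁) w` turns the integral into `(s₂ - s₁)^{a+b+1} ∫₀^∞ w^a (1+w)^b dw`, the second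
Euler integral of `B(a+1, -a-b-1)`; the substitution `x = w/(1+w)` reduces it to the first one,
`∫₀¹ x^{p-1} (1-x)^{q-1} dx`. The case `s₂ < s₁` is symmetric. When `s₁ = s₂` the integrand is
`(s₁-u)₊^{a+b}` with `a + b < -1`, which is not integrable near `u = s₁`, so the Bochner integral
is `0` by convention, as is the right-hand side `0^{a+b+1}`.
-/

open MeasureTheory

/-- The Euler beta function `B(x,y) = Γ(x)Γ(y)/Γ(x+y)`. -/
noncomputable def eulerBeta (x y : ℝ) : ℝ := Real.Gamma x * Real.Gamma y / Real.Gamma (x + y)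

open Set Real

theorem eulerBeta_eq_integral_Ioo {p q : ℝ} (hp : 0 < p) (hq : 0 < q) :
    eulerBeta p q = ∫ x in Ioo 0 1, x ^ (p - 1) * (1 - x) ^ (q - 1) := by
  have hre : ∀ x ∈ uIcc (0 : ℝ) 1,
      (x : ℂ) ^ ((p : ℂ) - 1) * (1 - (x : ℂ)) ^ ((q : ℂ) - 1)
        = ((x ^ (p - 1) * (1 - x) ^ (q - 1) : ℝ) : ℂ) := by
    intro x hx
    rw [uIcc_of_le zero_le_one] at hx
    push_cast [Complex.ofReal_cpow hx.1, Complex.ofReal_cpow (sub_nonneg.2 hx.2)]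
    rfl
  rw [show eulerBeta p q = ProbabilityTheory.beta p q from rfl,
    ProbabilityTheory.beta_eq_betaIntegralReal p q hp hq, Complex.betaIntegral,
    intervalIntegral.integral_congr hre, intervalIntegral.integral_ofReal, Complex.ofReal_re,
    intervalIntegral.integral_of_le zero_le_one, integral_Ioc_eq_integral_Ioo]

theorem eulerBeta_eq_integral_Ioi {p q : ℝ} (hp : 0 < p) (hq : 0 < q) :
    eulerBeta p q = ∫ w in Ioi 0, w ^ (p - 1) * (1 + w) ^ (-p - q) := by
  set f : ℝ → ℝ := fun w ↦ w / (1 + w)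
  have hf' : ∀ w ∈ Ioi (0 : ℝ), HasDerivWithinAt f (1 / (1 + w) ^ 2) (Ioi 0) w := by
    intro w (hw : 0 < w)
    exact ((hasDerivAt_id' w).div ((hasDerivAt_id' w).const_add 1) (by positivity)).congr_deriv
      (by ring) |>.hasDerivWithinAt
  have hinj : InjOn f (Ioi 0) := by
    intro x (hx : 0 < x) y (hy : 0 < y) hxy
    rw [div_eq_div_iff (by positivity) (by positivity)] at hxy
    linarith
  have himage : f '' Ioi 0 = Ioo 0 1 := by
    refine Subset.antisymm ?_ fun x ⟨hx₀, hx₁⟩ ↦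
      ⟨x / (1 - x), div_pos hx₀ (sub_pos.2 hx₁), ?_⟩
    · rintro _ ⟨w, hw : 0 < w, rfl⟩
      exact ⟨by positivity, (div_lt_one (by positivity)).2 (lt_one_add w)⟩
    · have : 1 - x ≠ 0 := (sub_pos.2 hx₁).ne'
      simp only [f]
      field_simp
      ring
  rw [eulerBeta_eq_integral_Ioo hp hq, ← himage,
    integral_image_eq_integral_abs_deriv_smul measurableSet_Ioi hf' hinj]
  refine setIntegral_congr_fun measurableSet_Ioi fun w (hw : 0 < w) ↦ ?_
  have h1w : 0 < 1 + w := by positivity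
  have hsub : 1 - f w = (1 + w)⁻¹ := by simp only [f]; field_simp; ring
  rw [hsub, abs_of_pos (by positivity), smul_eq_mul, div_rpow hw.le h1w.le, inv_rpow h1w.le,
    div_eq_mul_inv (w ^ (p - 1)), ← rpow_neg h1w.le, ← rpow_neg h1w.le, one_div, ← rpow_natCast,
    ← rpow_neg h1w.le, mul_comm, mul_assoc, mul_assoc, ← rpow_add h1w, ← rpow_add h1w]
  congr 2
  push_cast
  ring

theorem integral_posPart_rpow_mul_posPart_add_rpow {a b c : ℝ} (ha : -1 < a) (ha₀ : a ≠ 0)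
    (hab : a + b < -1) (hc : 0 < c) :
    ∫ t, (max t 0) ^ a * (max (t + c) 0) ^ b
      = c ^ (a + b + 1) * eulerBeta (a + 1) (-a - b - 1) := by
  have hvanish : ∀ t ∉ Ioi (0 : ℝ), (max t 0) ^ a * (max (t + c) 0) ^ b = 0 := fun t ht ↦ by
    rw [max_eq_right (not_lt.1 ht), zero_rpow ha₀, zero_mul]
  have hpos : ∀ t ∈ Ioi (0 : ℝ), (max t 0) ^ a * (max (t + c) 0) ^ b = t ^ a * (t + c) ^ b :=
    fun t (ht : 0 < t) ↦ by rw [max_eq_left ht.le, max_eq_left (by positivity)]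
  have hsubst : ∫ t in Ioi 0, t ^ a * (t + c) ^ b
      = c * ∫ w in Ioi 0, (c * w) ^ a * (c * w + c) ^ b := by
    rw [integral_comp_mul_left_Ioi (fun t ↦ t ^ a * (t + c) ^ b) 0 hc, mul_zero, smul_eq_mul,
      mul_inv_cancel_left₀ hc.ne']
  have hscale : ∀ w ∈ Ioi (0 : ℝ),
      (c * w) ^ a * (c * w + c) ^ b = c ^ (a + b) * (w ^ a * (1 + w) ^ b) := fun w (hw : 0 < w) ↦ by
    rw [show c * w + c = c * (1 + w) by ring, mul_rpow hc.le hw.le,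
      mul_rpow hc.le (by positivity), rpow_add hc]
    ring
  have hbeta : eulerBeta (a + 1) (-a - b - 1) = ∫ w in Ioi 0, w ^ a * (1 + w) ^ b := by
    rw [eulerBeta_eq_integral_Ioi (by linarith) (by linarith)]
    ring_nf
  rw [← setIntegral_eq_integral_of_forall_compl_eq_zero hvanish,
    setIntegral_congr_fun measurableSet_Ioi hpos, hsubst,
    setIntegral_congr_fun measurableSet_Ioi hscale, integral_const_mul, ← hbeta,
    rpow_add_one hc.ne']
  ring

theorem integral_posPart_sub_rpow_mul_posPart_sub_rpow_of_lt {a b s₁ s₂ : ℝ} (ha : -1 < a)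
    (ha₀ : a ≠ 0) (hab : a + b < -1) (h : s₁ < s₂) :
    ∫ u, (max (s₁ - u) 0) ^ a * (max (s₂ - u) 0) ^ b
      = (s₂ - s₁) ^ (a + b + 1) * eulerBeta (a + 1) (-a - b - 1) := by
  rw [← integral_posPart_rpow_mul_posPart_add_rpow ha ha₀ hab (sub_pos.2 h),
    ← integral_sub_left_eq_self _ volume s₁]
  congr 1 with u
  ring_nf

theorem not_integrable_posPart_sub_rpow {p : ℝ} (hp : p ≤ -1) (s : ℝ) :
    ¬ Integrable fun u ↦ (max (s - u) 0) ^ p := by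
  intro hint
  have hIoo : IntegrableOn (fun t : ℝ ↦ t ^ p) (Ioo 0 1) := by
    refine (hint.comp_sub_left s).integrableOn.congr_fun (fun t (ht : t ∈ Ioo 0 1) ↦ ?_)
      measurableSet_Ioo
    simp only [sub_sub_cancel, max_eq_left ht.1.le]
  rw [intervalIntegral.integrableOn_Ioo_rpow_iff one_pos] at hIoo
  linarith

/-- For `a, b ∈ (-1, -1/2)` and any `s₁, s₂ ∈ ℝ`,
`∫_ℝ (s₁-u)₊^a (s₂-u)₊^b du
  = (s₂-s₁)₊^{a+b+1} B(a+1, -a-b-1) + (s₁-s₂)₊^{a+b+1} B(b+1, -a-b-1)`. -/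
theorem integral_posPart_rpow_mul_posPart_rpow
    (a b : ℝ) (ha : a ∈ Set.Ioo (-1 : ℝ) (-1/2)) (hb : b ∈ Set.Ioo (-1 : ℝ) (-1/2))
    (s₁ s₂ : ℝ) :
    (∫ u : ℝ, (max (s₁ - u) 0) ^ a * (max (s₂ - u) 0) ^ b)
      = (max (s₂ - s₁) 0) ^ (a + b + 1) * eulerBeta (a + 1) (-a - b - 1)
        + (max (s₁ - s₂) 0) ^ (a + b + 1) * eulerBeta (b + 1) (-a - b - 1) := by
  obtain ⟨ha₁, ha₂⟩ := ha
  obtain ⟨hb₁, hb₂⟩ := hb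
  have hab : a + b < -1 := by linarith
  have hab₁ : a + b + 1 ≠ 0 := by linarith
  rcases lt_trichotomy s₁ s₂ with h | rfl | h
  · rw [integral_posPart_sub_rpow_mul_posPart_sub_rpow_of_lt ha₁ (by linarith) hab h,
      max_eq_left (sub_pos.2 h).le, max_eq_right (sub_neg.2 h).le,
      zero_rpow hab₁, zero_mul, add_zero]
  · have hsq : ∀ u,
        (max (s₁ - u) 0) ^ a * (max (s₁ - u) 0) ^ b = (max (s₁ - u) 0) ^ (a + b) :=
      fun u ↦ (rpow_add' (le_max_right _ _) (by linarith)).symm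
    simp only [hsq, integral_undef (not_integrable_posPart_sub_rpow hab.le s₁), sub_self,
      max_self, zero_rpow hab₁, zero_mul, add_zero]
  · simp_rw [mul_comm ((max (s₁ - _) 0) ^ a)]
    rw [integral_posPart_sub_rpow_mul_posPart_sub_rpow_of_lt hb₁ (by linarith) (by linarith) h,
      max_eq_left (sub_pos.2 h).le, max_eq_right (sub_neg.2 h).le,
      zero_rpow hab₁, zero_mul, zero_add]
    ring_nf
end

section
/- Let m ≥ 2 be an integer and β₁, ..., β_m real numbers with β_j > -1 for each j and β₁ + ... + β_m + m > 1. Then the integral over the simplex {0 < s₁ < ... < s_m < 1} of (s_m - s₁)^{β₁} ∏_{i=2}^m (s_i - s_{i-1})^{β_i} ds equals (m + β₁ + ... + β_m)^{-1} times the integral over the simplex {0 < u₁ < ... < u_{m-1} < 1} of (1 - u₁)^{β₁} · (u₂-u₁)^{β₂} · ... · (u_{m-1}-u_{m-2})^{β_{m-1}} · (1 - u_{m-1})^{β_m} du. -/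
/-!
Write a point of the big simplex as `s = t • (u, 1)` with `t = s_m ∈ (0, 1)` and `u` in the
smaller simplex. This map from `(0, 1) × simplex` onto the big simplex has Jacobian `t ^ (m - 1)`,
and the integrand is homogeneous of degree `∑ β` in `s`, so the integral splits as
`∫₀¹ t ^ (m - 1 + ∑ β) dt = (m + ∑ β)⁻¹` times the integral over `u`.
-/

open MeasureTheory Set

variable {n : ℕ}

def openSimplex (k : ℕ) : Set (Fin k → ℝ) := {x | (∀ i, x i ∈ Ioo 0 1) ∧ StrictMono x}

lemma measurableSet_openSimplex (k : ℕ) : MeasurableSet (openSimplex k) := by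
  have : openSimplex k = (⋂ i, (fun x => x i) ⁻¹' Ioo 0 1) ∩
      ⋂ (i) (j) (_ : i < j), {x : Fin k → ℝ | x i < x j} := by
    ext x; simp [openSimplex, StrictMono]
  rw [this]
  exact (MeasurableSet.iInter fun i => measurable_pi_apply i measurableSet_Ioo).inter <|
    MeasurableSet.iInter fun i => .iInter fun j => .iInter fun _ =>
      measurableSet_lt (measurable_pi_apply i) (measurable_pi_apply j)

lemma mem_openSimplex_succ_iff {k : ℕ} {x : Fin (k + 1) → ℝ} :
    x ∈ openSimplex (k + 1) ↔ 0 < x 0 ∧ StrictMono x ∧ x (Fin.last k) < 1 := by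
  refine ⟨fun ⟨hx, hmono⟩ => ⟨(hx 0).1, hmono, (hx _).2⟩,
    fun ⟨h0, hmono, h1⟩ => ⟨fun i => ⟨?_, ?_⟩, hmono⟩⟩
  exacts [h0.trans_le (hmono.monotone (Fin.zero_le i)),
    (hmono.monotone (Fin.le_last i)).trans_lt h1]

lemma Fin.strictMono_snoc {α : Type*} [Preorder α] {y : Fin (n + 1) → α} {a : α} :
    StrictMono (Fin.snoc y a : Fin (n + 2) → α) ↔ StrictMono y ∧ y (Fin.last n) < a := by
  simp only [Fin.strictMono_iff_lt_succ (f := (Fin.snoc y a : Fin (n + 2) → α)),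
    Fin.forall_fin_succ' (n := n), Fin.strictMono_iff_lt_succ (f := y)]
  simp [Fin.succ_castSucc, -Fin.castSucc_succ]

lemma measurableSet_last_init {α : Type*} [MeasurableSpace α] {A : Set α}
    {B : Set (Fin (n + 1) → α)} (hA : MeasurableSet A) (hB : MeasurableSet B) :
    MeasurableSet {v : Fin (n + 2) → α | v (Fin.last _) ∈ A ∧ Fin.init v ∈ B} :=
  (measurable_pi_apply _ hA).inter (measurable_pi_lambda _ (fun _ => measurable_pi_apply _) hB)

lemma setIntegral_last_init_mul {α : Type*} [MeasureSpace α] [SigmaFinite (volume : Measure α)]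
    (f : α → ℝ) (g : (Fin (n + 1) → α) → ℝ) (A : Set α) (B : Set (Fin (n + 1) → α)) :
    ∫ v in {v : Fin (n + 2) → α | v (Fin.last _) ∈ A ∧ Fin.init v ∈ B},
        f (v (Fin.last _)) * g (Fin.init v) = (∫ t in A, f t) * ∫ u in B, g u := by
  let e := MeasurableEquiv.piFinSuccAbove (fun _ => α) (Fin.last (n + 1))
  have hset : {v : Fin (n + 2) → α | v (Fin.last _) ∈ A ∧ Fin.init v ∈ B} = e ⁻¹' A ×ˢ B := by
    ext v; simp [e]
  have hfun : ∀ v, f (v (Fin.last _)) * g (Fin.init v) = f (e v).1 * g (e v).2 := by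
    intro v; simp [e]
  simp only [hset, hfun]
  rw [(volume_preserving_piFinSuccAbove (fun _ => α) _).setIntegral_preimage_emb
    e.measurableEmbedding (fun p => f p.1 * g p.2)]
  exact setIntegral_prod_mul f g A B

lemma setIntegral_Ioo_zero_one_rpow {a : ℝ} (ha : -1 < a) :
    ∫ t in Ioo (0 : ℝ) 1, t ^ a = (a + 1)⁻¹ := by
  rw [← integral_Ioc_eq_integral_Ioo, ← intervalIntegral.integral_of_le zero_le_one,
    integral_rpow (Or.inl ha), Real.one_rpow, Real.zero_rpow (by linarith), sub_zero, one_div]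

noncomputable def simplexIntegrand (β s : Fin (n + 2) → ℝ) : ℝ :=
  (s (Fin.last _) - s 0) ^ β 0 * ∏ i : Fin (n + 1), (s i.succ - s i.castSucc) ^ β i.succ

lemma simplexIntegrand_smul (β : Fin (n + 2) → ℝ) {s : Fin (n + 2) → ℝ} (hs : Monotone s)
    {t : ℝ} (ht : 0 < t) :
    simplexIntegrand β (t • s) = t ^ (∑ j, β j) * simplexIntegrand β s := by
  have hgap {a b : ℝ} (hab : b ≤ a) (r : ℝ) : (t * a - t * b) ^ r = t ^ r * (a - b) ^ r := by
    rw [← mul_sub, Real.mul_rpow ht.le (sub_nonneg.2 hab)]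
  simp only [simplexIntegrand, Pi.smul_apply, smul_eq_mul]
  rw [hgap (hs (Fin.zero_le _)),
    Finset.prod_congr rfl fun i _ => hgap (hs (Fin.castSucc_le_succ i)) _, Finset.prod_mul_distrib,
    Fin.sum_univ_succ, Real.rpow_add ht, Real.rpow_sum_of_pos ht]
  ring

lemma simplexIntegrand_snoc_one (β : Fin (n + 2) → ℝ) (u : Fin (n + 1) → ℝ) :
    simplexIntegrand β (Fin.snoc u 1) =
      (1 - u 0) ^ β 0 * (∏ i : Fin n, (u i.succ - u i.castSucc) ^ β i.succ.castSucc) *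
        (1 - u (Fin.last n)) ^ β (Fin.last (n + 1)) := by
  simp [simplexIntegrand, Fin.prod_univ_castSucc, mul_assoc, Fin.succ_castSucc,
    -Fin.castSucc_succ]

noncomputable def scaleByLast (v : Fin (n + 2) → ℝ) : Fin (n + 2) → ℝ :=
  v (Fin.last _) • Fin.snoc (Fin.init v) 1

@[simp] lemma scaleByLast_castSucc (v : Fin (n + 2) → ℝ) (j : Fin (n + 1)) :
    scaleByLast v j.castSucc = v (Fin.last _) * v j.castSucc := by
  simp [scaleByLast, Fin.init]

@[simp] lemma scaleByLast_last (v : Fin (n + 2) → ℝ) :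
    scaleByLast v (Fin.last _) = v (Fin.last _) := by
  simp [scaleByLast]

lemma scaleByLast_snoc (u : Fin (n + 1) → ℝ) (t : ℝ) :
    scaleByLast (Fin.snoc u t) = t • Fin.snoc u 1 := by
  simp [scaleByLast]

open ContinuousLinearMap in
noncomputable def scaleByLastDeriv (v : Fin (n + 2) → ℝ) :
    (Fin (n + 2) → ℝ) →L[ℝ] (Fin (n + 2) → ℝ) :=
  pi <| Fin.lastCases (proj (Fin.last _))
    fun j => v (Fin.last _) • proj j.castSucc + v j.castSucc • proj (Fin.last _)

lemma hasFDerivAt_scaleByLast (v : Fin (n + 2) → ℝ) :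
    HasFDerivAt scaleByLast (scaleByLastDeriv v) v := by
  refine hasFDerivAt_pi.2 fun i => ?_
  induction i using Fin.lastCases with
  | last => simpa [scaleByLastDeriv] using hasFDerivAt_apply (Fin.last _) v
  | cast j =>
    simp only [Fin.lastCases_castSucc, scaleByLast_castSucc]
    exact (hasFDerivAt_apply (Fin.last _) v).mul (hasFDerivAt_apply j.castSucc v)

lemma det_scaleByLastDeriv (v : Fin (n + 2) → ℝ) :
    (scaleByLastDeriv v).det = v (Fin.last _) ^ (n + 1) := by
  rw [ContinuousLinearMap.det, ← LinearMap.det_toMatrix',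
    Matrix.det_of_isUpperTriangular, Fin.prod_univ_castSucc]
  · simp [scaleByLastDeriv, LinearMap.toMatrix'_apply]
  · intro i j (hji : j < i)
    induction i using Fin.lastCases with
    | last => simp [scaleByLastDeriv, LinearMap.toMatrix'_apply, Pi.single_eq_of_ne hji.ne']
    | cast k =>
      simp [scaleByLastDeriv, LinearMap.toMatrix'_apply, Pi.single_eq_of_ne hji.ne',
        Pi.single_eq_of_ne (hji.trans (Fin.castSucc_lt_last k)).ne']

lemma injOn_scaleByLast : InjOn (scaleByLast (n := n)) {v | v (Fin.last _) ≠ 0} := by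
  intro v hv w _ h
  have hlast : v (Fin.last _) = w (Fin.last _) := by simpa using congrFun h (Fin.last _)
  refine funext fun i => ?_
  induction i using Fin.lastCases with
  | last => exact hlast
  | cast j =>
    have := congrFun h j.castSucc
    simp only [scaleByLast_castSucc, ← hlast] at this
    exact mul_left_cancel₀ hv this

lemma smul_snoc_one_mem_openSimplex_iff {t : ℝ} (ht : 0 < t) {u : Fin (n + 1) → ℝ} :
    t • (Fin.snoc u 1 : Fin (n + 2) → ℝ) ∈ openSimplex (n + 2) ↔
      t < 1 ∧ u ∈ openSimplex (n + 1) := by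
  have hmono : StrictMono (t • (Fin.snoc u 1 : Fin (n + 2) → ℝ)) ↔
      StrictMono (Fin.snoc u 1 : Fin (n + 2) → ℝ) :=
    ⟨fun h a b hab => (mul_lt_mul_iff_right₀ ht).1 (h hab), fun h => h.const_mul ht⟩
  simp only [mem_openSimplex_succ_iff, hmono, Fin.strictMono_snoc]
  simp only [Pi.smul_apply, Fin.snoc_apply_zero, smul_eq_mul, mul_pos_iff_of_pos_left ht,
    Fin.snoc_last, mul_one]
  tauto

lemma scaleByLast_image :
    scaleByLast '' {v | v (Fin.last _) ∈ Ioo 0 1 ∧ Fin.init v ∈ openSimplex (n + 1)} =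
      openSimplex (n + 2) := by
  ext s
  constructor
  · rintro ⟨v, ⟨ht, hu⟩, rfl⟩
    exact (smul_snoc_one_mem_openSimplex_iff ht.1).2 ⟨ht.2, hu⟩
  · intro hs
    set t := s (Fin.last _)
    have ht : 0 < t := (hs.1 _).1
    have hs_eq : s = scaleByLast (Fin.snoc (t⁻¹ • Fin.init s) t) := by
      rw [scaleByLast_snoc]
      ext i
      induction i using Fin.lastCases with
      | last => simp [t]
      | cast j => simp [Fin.init, ht.ne']
    refine ⟨_, ?_, hs_eq.symm⟩
    rw [hs_eq, scaleByLast_snoc, smul_snoc_one_mem_openSimplex_iff ht] at hs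
    simpa [ht] using hs

lemma abs_det_smul_simplexIntegrand_scaleByLast (β : Fin (n + 2) → ℝ) {v : Fin (n + 2) → ℝ}
    (ht : 0 < v (Fin.last _)) (hu : Fin.init v ∈ openSimplex (n + 1)) :
    |(scaleByLastDeriv v).det| • simplexIntegrand β (scaleByLast v) =
      v (Fin.last _) ^ ((n + 1 : ℝ) + ∑ j, β j) * simplexIntegrand β (Fin.snoc (Fin.init v) 1) := by
  have hmono : StrictMono (Fin.snoc (Fin.init v) 1 : Fin (n + 2) → ℝ) :=
    Fin.strictMono_snoc.2 ⟨hu.2, (hu.1 _).2⟩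
  rw [det_scaleByLastDeriv, scaleByLast, simplexIntegrand_smul β hmono.monotone ht,
    Real.rpow_add ht, abs_of_pos (pow_pos ht _), smul_eq_mul, ← Real.rpow_natCast]
  push_cast
  ring

theorem simplex_integral_scaling_step_general
    (n : ℕ) (β : Fin (n + 2) → ℝ)
    (hsum : (∑ j, β j) + (n + 2 : ℝ) > 1) :
    (∫ s in {s : Fin (n + 2) → ℝ | (∀ i, s i ∈ Set.Ioo (0 : ℝ) 1) ∧ StrictMono s},
        (s (Fin.last (n + 1)) - s 0) ^ β 0 *
          ∏ i : Fin (n + 1), (s i.succ - s i.castSucc) ^ β i.succ)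
      = ((n + 2 : ℝ) + ∑ j, β j)⁻¹ *
          ∫ u in {u : Fin (n + 1) → ℝ | (∀ i, u i ∈ Set.Ioo (0 : ℝ) 1) ∧ StrictMono u},
            (1 - u 0) ^ β 0 *
              (∏ i : Fin n, (u i.succ - u i.castSucc) ^ β i.succ.castSucc) *
              (1 - u (Fin.last n)) ^ β (Fin.last (n + 1)) := by
  set S := {v : Fin (n + 2) → ℝ | v (Fin.last _) ∈ Ioo 0 1 ∧ Fin.init v ∈ openSimplex (n + 1)}
  have hS : MeasurableSet S :=
    measurableSet_last_init measurableSet_Ioo (measurableSet_openSimplex _)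
  calc _ = ∫ s in scaleByLast '' S, simplexIntegrand β s := by rw [scaleByLast_image]; rfl
    _ = ∫ v in S, |(scaleByLastDeriv v).det| • simplexIntegrand β (scaleByLast v) :=
      integral_image_eq_integral_abs_det_fderiv_smul volume hS
        (fun v _ => (hasFDerivAt_scaleByLast v).hasFDerivWithinAt)
        (injOn_scaleByLast.mono fun v hv => hv.1.1.ne') _
    _ = ∫ v in S, v (Fin.last _) ^ ((n + 1 : ℝ) + ∑ j, β j) *
          simplexIntegrand β (Fin.snoc (Fin.init v) 1) :=
      setIntegral_congr_fun hS fun v hv =>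
        abs_det_smul_simplexIntegrand_scaleByLast β hv.1.1 hv.2
    _ = (∫ t in Ioo 0 1, t ^ ((n + 1 : ℝ) + ∑ j, β j)) *
          ∫ u in openSimplex (n + 1), simplexIntegrand β (Fin.snoc u 1) :=
      setIntegral_last_init_mul (fun t => t ^ _) (fun u => simplexIntegrand β (Fin.snoc u 1)) _ _
    _ = _ := by
      rw [setIntegral_Ioo_zero_one_rpow (by linarith)]
      simp only [simplexIntegrand_snoc_one, openSimplex]
      ring

/-- The scaling reduction step (substitution `u_i = s_i / s_m`) in the proof of the key
simplex-integral lemma.  Here `m = n + 2 ≥ 2` and the exponents are `β 0, …, β (n+1)`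
(i.e. `β₁, …, β_m`):
`∫_{0<s₁<⋯<s_m<1} (s_m - s₁)^{β₁} ∏_{i=2}^m (s_i - s_{i-1})^{β_i} ds
  = (m + Σβ)⁻¹ ∫_{0<u₁<⋯<u_{m-1}<1} (1-u₁)^{β₁} (u₂-u₁)^{β₂} ⋯ (u_{m-1}-u_{m-2})^{β_{m-1}}
      (1-u_{m-1})^{β_m} du`. -/
theorem simplex_integral_scaling_step
    (n : ℕ) (β : Fin (n + 2) → ℝ) (hβ : ∀ j, -1 < β j)
    (hsum : (∑ j, β j) + (n + 2 : ℝ) > 1) :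
    (∫ s in {s : Fin (n + 2) → ℝ | (∀ i, s i ∈ Set.Ioo (0 : ℝ) 1) ∧ StrictMono s},
        (s (Fin.last (n + 1)) - s 0) ^ β 0 *
          ∏ i : Fin (n + 1), (s i.succ - s i.castSucc) ^ β i.succ)
      = ((n + 2 : ℝ) + ∑ j, β j)⁻¹ *
          ∫ u in {u : Fin (n + 1) → ℝ | (∀ i, u i ∈ Set.Ioo (0 : ℝ) 1) ∧ StrictMono u},
            (1 - u 0) ^ β 0 *
              (∏ i : Fin n, (u i.succ - u i.castSucc) ^ β i.succ.castSucc) *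
              (1 - u (Fin.last n)) ^ β (Fin.last (n + 1)) :=
  simplex_integral_scaling_step_general n β hsum
end

section
/- Let γ₁, γ₂ ∈ (-1, -1/2) with γ₁ + γ₂ > -3/2, let A ∈ ℝ, and define g(x,y) = (A/2)·(x₊^{γ₁} y₊^{γ₂} + x₊^{γ₂} y₊^{γ₁}). For s₁ < s₂, the integral ∫_{ℝ²} g(s₁-x₁, s₁-x₂) g(s₂-x₂, s₂-x₁) dx₁dx₂ equals (A/2)² (s₂-s₁)^{2(γ₁+γ₂)+2} · Σ_{σ ∈ {1,2}²} B(γ_{σ₁}+1, -γ_{σ₂'}-γ_{σ₁}-1) · B(γ_{σ₁'}+1, -γ_{σ₁'}-γ_{σ₂}-1), where for σ = (σ₁,σ₂) with σ_i ∈ {1,2} the complement is σ_i' = 3 - σ_i. -/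
/-!
Expanding both kernels writes the integrand as a sum over `σ` of `(A/2)²` times products
`u(x₁) v(x₂)` of functions of the form `(s₁ - x)₊^α (s₂ - x)₊^β`, so each term factorises by
Fubini. Such a function vanishes for `x ≥ s₁`, and on `x < s₁` the substitution
`x = s₂ - (s₂ - s₁)/t` turns its integral into `(s₂ - s₁)^{α+β+1}` times the beta integral
`∫₀¹ t^{-α-β-2} (1-t)^α dt = B(α+1, -α-β-1)`. In each term every `γᵢ` occurs twice among the
exponents, so the powers of `s₂ - s₁` multiply to `(s₂ - s₁)^{2(γ₁+γ₂)+2}`.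
-/

open MeasureTheory

/-- The generalized Rosenblatt kernel
`g(x,y) = (A/2) (x₊^{γ₁} y₊^{γ₂} + x₊^{γ₂} y₊^{γ₁})`. -/
noncomputable def genRosenblattKernel (A γ₁ γ₂ : ℝ) (x y : ℝ) : ℝ :=
  A / 2 * ((max x 0) ^ γ₁ * (max y 0) ^ γ₂ + (max x 0) ^ γ₂ * (max y 0) ^ γ₁)

open Set

lemma eulerBeta_comm (a b : ℝ) : eulerBeta a b = eulerBeta b a := by
  rw [eulerBeta, eulerBeta, mul_comm, add_comm]

lemma ofReal_rpow_mul_one_sub_rpow {a b t : ℝ} (ht : t ∈ Icc 0 1) :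
    ((t ^ (a - 1) * (1 - t) ^ (b - 1) : ℝ) : ℂ)
      = (t : ℂ) ^ (a - 1 : ℂ) * (1 - t : ℂ) ^ (b - 1 : ℂ) := by
  rw [Complex.ofReal_mul, Complex.ofReal_cpow ht.1, Complex.ofReal_cpow (sub_nonneg.2 ht.2)]
  push_cast
  rfl

lemma integrableOn_rpow_mul_one_sub_rpow {a b : ℝ} (ha : 0 < a) (hb : 0 < b) :
    IntegrableOn (fun t : ℝ ↦ t ^ (a - 1) * (1 - t) ^ (b - 1)) (Ioo 0 1) := by
  have h := (Complex.betaIntegral_convergent (u := a) (v := b) (by simpa) (by simpa)).1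
  refine IntegrableOn.congr_fun (h.mono_set Ioo_subset_Ioc_self).re (fun t ht ↦ ?_)
    measurableSet_Ioo
  rw [← ofReal_rpow_mul_one_sub_rpow (Ioo_subset_Icc_self ht), RCLike.re_to_complex,
    Complex.ofReal_re]

lemma integral_rpow_mul_one_sub_rpow {a b : ℝ} (ha : 0 < a) (hb : 0 < b) :
    ∫ t in Ioo 0 1, t ^ (a - 1) * (1 - t) ^ (b - 1) = eulerBeta a b := by
  have h := Complex.betaIntegral_convergent (u := a) (v := b) (by simpa) (by simpa)
  rw [show eulerBeta a b = ProbabilityTheory.beta a b from rfl,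
    ProbabilityTheory.beta_eq_betaIntegralReal a b ha hb, Complex.betaIntegral,
    intervalIntegral.integral_of_le zero_le_one, ← integral_Ioc_eq_integral_Ioo,
    ← RCLike.re_to_complex, ← integral_re h.1]
  refine setIntegral_congr_fun measurableSet_Ioc fun t ht ↦ ?_
  rw [← ofReal_rpow_mul_one_sub_rpow (Ioc_subset_Icc_self ht)]
  rfl

lemma div_sq_mul_rpow_mul_rpow {c t : ℝ} (hc : 0 < c) (ht : t ∈ Ioo 0 1) (α β : ℝ) :
    c / t ^ 2 * ((c / t - c) ^ α * (c / t) ^ β)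
      = c ^ (α + β + 1) * (t ^ ((-α - β - 1) - 1) * (1 - t) ^ ((α + 1) - 1)) := by
  obtain ⟨ht0, ht1⟩ := ht
  have h1t : 0 < 1 - t := by linarith
  rw [show c / t - c = c * (1 - t) / t by field_simp, Real.div_rpow (by positivity) ht0.le,
    Real.mul_rpow hc.le h1t.le, Real.div_rpow hc.le ht0.le, add_sub_cancel_right,
    show -α - β - 1 - 1 = -(α + β + 2) by ring, Real.rpow_neg ht0.le,
    Real.rpow_add hc, Real.rpow_add hc, Real.rpow_add ht0, Real.rpow_add ht0, Real.rpow_one,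
    Real.rpow_two]
  field_simp

lemma integral_Iio_sub_rpow_mul_sub_rpow {α β s₁ s₂ : ℝ} (hα : -1 < α) (hαβ : α + β < -1)
    (hs : s₁ < s₂) :
    IntegrableOn (fun x ↦ (s₁ - x) ^ α * (s₂ - x) ^ β) (Iio s₁) ∧
      ∫ x in Iio s₁, (s₁ - x) ^ α * (s₂ - x) ^ β
        = (s₂ - s₁) ^ (α + β + 1) * eulerBeta (α + 1) (-α - β - 1) := by
  set c := s₂ - s₁
  have hc : 0 < c := sub_pos.2 hs
  set φ : ℝ → ℝ := fun t ↦ s₂ - c / t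
  have hφ_image : φ '' Ioo 0 1 = Iio s₁ := by
    ext x
    constructor
    · rintro ⟨t, ⟨ht0, ht1⟩, rfl⟩
      have : c < c / t := (lt_div_iff₀ ht0).2 (by nlinarith)
      simp only [φ, mem_Iio]
      linarith
    · intro hx
      have hx' : c < s₂ - x := by simp only [mem_Iio] at hx; linarith
      refine ⟨c / (s₂ - x), ⟨div_pos hc (by linarith), (div_lt_one (by linarith)).2 hx'⟩, ?_⟩
      simp only [φ]
      field_simp
      ring
  have hφ_deriv : ∀ t ∈ Ioo (0 : ℝ) 1, HasDerivWithinAt φ (c / t ^ 2) (Ioo 0 1) t := by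
    intro t ht
    have h := ((hasDerivAt_inv ht.1.ne').const_mul c).const_sub s₂
    simp only [← div_eq_mul_inv] at h
    exact (h.congr_deriv (by ring)).hasDerivWithinAt
  have hφ_inj : InjOn φ (Ioo 0 1) := by
    intro t ht u hu h
    simp only [φ, sub_right_inj, div_eq_div_iff ht.1.ne' hu.1.ne'] at h
    exact (mul_left_cancel₀ hc.ne' h).symm
  have hφ_jac : ∀ t ∈ Ioo (0 : ℝ) 1, |c / t ^ 2| • ((s₁ - φ t) ^ α * (s₂ - φ t) ^ β)
      = c ^ (α + β + 1) * (t ^ ((-α - β - 1) - 1) * (1 - t) ^ ((α + 1) - 1)) := by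
    intro t ht
    rw [abs_of_pos (by have := ht.1; positivity), smul_eq_mul,
      ← div_sq_mul_rpow_mul_rpow hc ht]
    simp only [φ, c]
    ring_nf
  have ha : 0 < -α - β - 1 := by linarith
  have hb : 0 < α + 1 := by linarith
  rw [← hφ_image, integrableOn_image_iff_integrableOn_abs_deriv_smul measurableSet_Ioo
    hφ_deriv hφ_inj, integral_image_eq_integral_abs_deriv_smul measurableSet_Ioo hφ_deriv hφ_inj,
    setIntegral_congr_fun measurableSet_Ioo hφ_jac, integral_const_mul,
    integral_rpow_mul_one_sub_rpow ha hb, eulerBeta_comm]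
  exact ⟨IntegrableOn.congr_fun ((integrableOn_rpow_mul_one_sub_rpow ha hb).const_mul _)
    (fun t ht ↦ (hφ_jac t ht).symm) measurableSet_Ioo, rfl⟩

lemma integral_max_sub_rpow_mul_max_sub_rpow {α β s₁ s₂ : ℝ} (hα : -1 < α) (hα0 : α ≠ 0)
    (hαβ : α + β < -1) (hs : s₁ < s₂) :
    Integrable (fun x ↦ max (s₁ - x) 0 ^ α * max (s₂ - x) 0 ^ β) ∧
      ∫ x, max (s₁ - x) 0 ^ α * max (s₂ - x) 0 ^ β
        = (s₂ - s₁) ^ (α + β + 1) * eulerBeta (α + 1) (-α - β - 1) := by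
  have h_indicator : (fun x ↦ max (s₁ - x) 0 ^ α * max (s₂ - x) 0 ^ β)
      = (Iio s₁).indicator (fun x ↦ (s₁ - x) ^ α * (s₂ - x) ^ β) := by
    funext x
    by_cases hx : x < s₁
    · rw [indicator_of_mem (mem_Iio.2 hx), max_eq_left (by linarith), max_eq_left (by linarith)]
    · rw [indicator_of_notMem (notMem_Iio.2 (not_lt.1 hx)), max_eq_right (by linarith), Real.zero_rpow hα0, zero_mul]
  rw [h_indicator, integrable_indicator_iff measurableSet_Iio,
    integral_indicator measurableSet_Iio]
  exact integral_Iio_sub_rpow_mul_sub_rpow hα hαβ hs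

lemma integrable_fin_two_mul {E 𝕜 : Type*} [RCLike 𝕜] [MeasureSpace E]
    [SigmaFinite (volume : Measure E)] {f g : E → 𝕜} (hf : Integrable f) (hg : Integrable g) :
    Integrable (fun x : Fin 2 → E ↦ f (x 0) * g (x 1)) := by
  rw [volume_pi]
  simpa [Fin.prod_univ_two] using
    Integrable.fintype_prod (f := ![f, g]) (μ := fun _ ↦ volume) (Fin.forall_fin_two.2 ⟨hf, hg⟩)

lemma integral_fin_two_mul {E 𝕜 : Type*} [RCLike 𝕜] [MeasureSpace E]
    [SigmaFinite (volume : Measure E)] (f g : E → 𝕜) :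
    ∫ x : Fin 2 → E, f (x 0) * g (x 1) = (∫ y, f y) * ∫ y, g y := by
  simpa [Fin.prod_univ_two] using integral_fintype_prod_volume_eq_prod (fun i ↦ ![f, g] i)

lemma sum_fin_two_arrow {α M : Type*} [Fintype α] [AddCommMonoid M] (f : α → α → M) :
    ∑ σ : Fin 2 → α, f (σ 0) (σ 1) = ∑ i, ∑ j, f i j := by
  rw [← (finTwoArrowEquiv α).symm.sum_comp, Fintype.sum_prod_type]
  rfl

lemma genRosenblattKernel_eq_sum (A γ₁ γ₂ x y : ℝ) :
    genRosenblattKernel A γ₁ γ₂ x y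
      = A / 2 * ∑ i : Fin 2, max x 0 ^ ![γ₁, γ₂] i * max y 0 ^ ![γ₁, γ₂] i.rev := by
  simp [genRosenblattKernel, Fin.sum_univ_two]

lemma genRosenblattKernel_mul_genRosenblattKernel (A γ₁ γ₂ a b c d : ℝ) :
    genRosenblattKernel A γ₁ γ₂ a b * genRosenblattKernel A γ₁ γ₂ c d
      = ∑ σ : Fin 2 → Fin 2, (A / 2) ^ 2 *
          ((max a 0 ^ ![γ₁, γ₂] (σ 0) * max d 0 ^ ![γ₁, γ₂] (σ 1).rev) *
            (max b 0 ^ ![γ₁, γ₂] (σ 0).rev * max c 0 ^ ![γ₁, γ₂] (σ 1))) := by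
  rw [genRosenblattKernel_eq_sum, genRosenblattKernel_eq_sum, mul_mul_mul_comm,
    Finset.sum_mul_sum, Finset.mul_sum,
    sum_fin_two_arrow (fun i j ↦ (A / 2) ^ 2 *
      ((max a 0 ^ ![γ₁, γ₂] i * max d 0 ^ ![γ₁, γ₂] j.rev) *
        (max b 0 ^ ![γ₁, γ₂] i.rev * max c 0 ^ ![γ₁, γ₂] j)))]
  refine Finset.sum_congr rfl fun i _ ↦ ?_
  rw [Finset.mul_sum]
  refine Finset.sum_congr rfl fun j _ ↦ ?_
  ring

theorem circular_integral_two_general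
    (γ₁ γ₂ : ℝ) (h1 : γ₁ ∈ Set.Ioo (-1 : ℝ) (-1/2)) (h2 : γ₂ ∈ Set.Ioo (-1 : ℝ) (-1/2))
    (A : ℝ) (s₁ s₂ : ℝ) (hs : s₁ < s₂) :
    (∫ x : Fin 2 → ℝ,
        genRosenblattKernel A γ₁ γ₂ (s₁ - x 0) (s₁ - x 1) *
          genRosenblattKernel A γ₁ γ₂ (s₂ - x 1) (s₂ - x 0))
      = (A / 2) ^ 2 * (s₂ - s₁) ^ (2 * (γ₁ + γ₂) + 2) *
          ∑ σ : Fin 2 → Fin 2,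
            eulerBeta (![γ₁, γ₂] (σ 0) + 1)
                (-(![γ₁, γ₂] ((σ 1).rev)) - ![γ₁, γ₂] (σ 0) - 1) *
              eulerBeta (![γ₁, γ₂] ((σ 0).rev) + 1)
                (-(![γ₁, γ₂] ((σ 0).rev)) - ![γ₁, γ₂] (σ 1) - 1) := by
  set γ : Fin 2 → ℝ := ![γ₁, γ₂]
  set F : Fin 2 → Fin 2 → ℝ → ℝ := fun i j y ↦ max (s₁ - y) 0 ^ γ i * max (s₂ - y) 0 ^ γ j
  have hγ : ∀ i, γ i ∈ Ioo (-1) (-1 / 2) := Fin.forall_fin_two.2 ⟨h1, h2⟩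
  have hγ_rev : ∀ i, γ i + γ i.rev = γ₁ + γ₂ := Fin.forall_fin_two.2 ⟨rfl, add_comm _ _⟩
  have hF : ∀ i j, Integrable (F i j) ∧
      ∫ y, F i j y = (s₂ - s₁) ^ (γ i + γ j + 1) * eulerBeta (γ i + 1) (-γ i - γ j - 1) :=
    fun i j ↦ integral_max_sub_rpow_mul_max_sub_rpow (hγ i).1 (by linarith [(hγ i).2])
      (by linarith [(hγ i).2, (hγ j).2]) hs
  calc _ = ∫ x : Fin 2 → ℝ, ∑ σ : Fin 2 → Fin 2,
          (A / 2) ^ 2 * (F (σ 0) (σ 1).rev (x 0) * F (σ 0).rev (σ 1) (x 1)) := by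
        simp_rw [genRosenblattKernel_mul_genRosenblattKernel]
        rfl
    _ = ∑ σ : Fin 2 → Fin 2,
          (A / 2) ^ 2 * ((∫ y, F (σ 0) (σ 1).rev y) * ∫ y, F (σ 0).rev (σ 1) y) := by
        rw [integral_finsetSum _ fun σ _ ↦
          ((integrable_fin_two_mul (hF _ _).1 (hF _ _).1).const_mul _)]
        simp_rw [integral_const_mul, integral_fin_two_mul]
    _ = _ := by
        rw [Finset.mul_sum]
        refine Finset.sum_congr rfl fun σ _ ↦ ?_
        rw [(hF _ _).2, (hF _ _).2, mul_mul_mul_comm, ← Real.rpow_add (sub_pos.2 hs),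
          show γ (σ 0) + γ (σ 1).rev + 1 + (γ (σ 0).rev + γ (σ 1) + 1) = 2 * (γ₁ + γ₂) + 2 by
            linarith [hγ_rev (σ 0), hγ_rev (σ 1)]]
        ring_nf

/-- For `s₁ < s₂`, `∫_{ℝ²} g(s₁-x₁,s₁-x₂) g(s₂-x₂,s₂-x₁) dx₁ dx₂
  = (A/2)² (s₂-s₁)^{2(γ₁+γ₂)+2} Σ_{σ∈{1,2}²}
      B(γ_{σ₁}+1, -γ_{σ₂'}-γ_{σ₁}-1) B(γ_{σ₁'}+1, -γ_{σ₁'}-γ_{σ₂}-1)`,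
where the sum ranges over maps `σ : Fin 2 → Fin 2` (values indexing `γ = ![γ₁, γ₂]`)
and the complement `σ'` is given by `Fin.rev`. -/
theorem circular_integral_two
    (γ₁ γ₂ : ℝ) (h1 : γ₁ ∈ Set.Ioo (-1 : ℝ) (-1/2)) (h2 : γ₂ ∈ Set.Ioo (-1 : ℝ) (-1/2))
    (hsum : γ₁ + γ₂ > -3/2) (A : ℝ) (s₁ s₂ : ℝ) (hs : s₁ < s₂) :
    (∫ x : Fin 2 → ℝ,
        genRosenblattKernel A γ₁ γ₂ (s₁ - x 0) (s₁ - x 1) *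
          genRosenblattKernel A γ₁ γ₂ (s₂ - x 1) (s₂ - x 0))
      = (A / 2) ^ 2 * (s₂ - s₁) ^ (2 * (γ₁ + γ₂) + 2) *
          ∑ σ : Fin 2 → Fin 2,
            eulerBeta (![γ₁, γ₂] (σ 0) + 1)
                (-(![γ₁, γ₂] ((σ 1).rev)) - ![γ₁, γ₂] (σ 0) - 1) *
              eulerBeta (![γ₁, γ₂] ((σ 0).rev) + 1)
                (-(![γ₁, γ₂] ((σ 0).rev)) - ![γ₁, γ₂] (σ 1) - 1) :=
  circular_integral_two_general γ₁ γ₂ h1 h2 A s₁ s₂ hs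
end

section
/- Let γ₁, γ₂ ∈ (-1, -1/2) with γ₁ + γ₂ > -3/2, let A ∈ ℝ, and define g(x,y) = (A/2)·(x₊^{γ₁} y₊^{γ₂} + x₊^{γ₂} y₊^{γ₁}). For s₁ < s₂ < s₃, the integral ∫_{ℝ³} g(s₁-x₁, s₁-x₂) g(s₂-x₂, s₂-x₃) g(s₃-x₃, s₃-x₁) dx₁dx₂dx₃ equals (A/2)³ · Σ_{σ ∈ {1,2}³} B(γ_{σ₁}+1, -γ_{σ₃'}-γ_{σ₁}-1) · B(γ_{σ₁'}+1, -γ_{σ₁'}-γ_{σ₂}-1) · B(γ_{σ₂'}+1, -γ_{σ₂'}-γ_{σ₃}-1) · (s₃-s₁)^{γ_{σ₃'}+γ_{σ₁}+1} · (s₂-s₁)^{γ_{σ₁'}+γ_{σ₂}+1} · (s₃-s₂)^{γ_{σ₂'}+γ_{σ₃}+1}, where for σ = (σ₁,σ₂,σ₃) with σ_i ∈ {1,2} the complement is σ_i' = 3 - σ_i. -/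
open MeasureTheory

/-!
Writing `g(x, y) = (A/2) ∑ᵢ x₊^{γᵢ} y₊^{γᵢ'}`, the integrand expands into eight terms indexed by
`σ ∈ {1,2}³`, each a product of three functions of a single variable `xᵢ`. By Fubini every term
factors into one-dimensional integrals `∫ (s - x)₊^a (t - x)₊^b dx` with `s < t`, and the
substitution `s - x = (t - s) u / (1 - u)` turns each of them into the beta integral
`B(a + 1, -a - b - 1) (t - s)^{a + b + 1}`.
-/

open Set

section BetaIntegral

variable {p q : ℝ}

lemma ofReal_rpow_mul_one_sub_rpow_s8 {x : ℝ} (hx : x ∈ Ioc 0 1) :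
    ((x ^ (p - 1) * (1 - x) ^ (q - 1) : ℝ) : ℂ)
      = (x : ℂ) ^ ((p : ℂ) - 1) * (1 - (x : ℂ)) ^ ((q : ℂ) - 1) := by
  rw [Complex.ofReal_mul, Complex.ofReal_cpow hx.1.le, Complex.ofReal_cpow (by linarith [hx.2])]
  push_cast
  rfl

lemma integrableOn_rpow_mul_one_sub_rpow_s8 (hp : 0 < p) (hq : 0 < q) :
    IntegrableOn (fun x : ℝ => x ^ (p - 1) * (1 - x) ^ (q - 1)) (Ioc 0 1) := by
  have h := (Complex.betaIntegral_convergent (u := p) (v := q) (by simpa) (by simpa)).1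
  have h' : IntegrableOn (fun x : ℝ => ((x ^ (p - 1) * (1 - x) ^ (q - 1) : ℝ) : ℂ)) (Ioc 0 1) :=
    h.congr_fun (fun x hx => (ofReal_rpow_mul_one_sub_rpow_s8 hx).symm) measurableSet_Ioc
  simpa [IntegrableOn] using h'.re

lemma integral_rpow_mul_one_sub_rpow_s8 (hp : 0 < p) (hq : 0 < q) :
    ∫ x in Ioc (0 : ℝ) 1, x ^ (p - 1) * (1 - x) ^ (q - 1) = eulerBeta p q := by
  have h : Complex.betaIntegral p q
      = ((∫ x in Ioc (0 : ℝ) 1, x ^ (p - 1) * (1 - x) ^ (q - 1) : ℝ) : ℂ) := by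
    rw [Complex.betaIntegral, intervalIntegral.integral_of_le zero_le_one]
    exact (setIntegral_congr_fun measurableSet_Ioc fun x hx =>
      (ofReal_rpow_mul_one_sub_rpow_s8 hx).symm).trans integral_ofReal
  rw [eulerBeta, ← ProbabilityTheory.beta, ProbabilityTheory.beta_eq_betaIntegralReal p q hp hq, h,
    Complex.ofReal_re]

end BetaIntegral

section HalfLine

variable {a b c : ℝ}

lemma image_mul_div_one_sub_Ioo (hc : 0 < c) :
    (fun u : ℝ => c * u / (1 - u)) '' Ioo 0 1 = Ioi 0 := by
  ext y
  constructor
  · rintro ⟨u, ⟨hu0, hu1⟩, rfl⟩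
    exact div_pos (mul_pos hc hu0) (by linarith)
  · intro (hy : 0 < y)
    have hyc : 0 < y + c := by linarith
    refine ⟨y / (y + c), ⟨div_pos hy hyc, (div_lt_one hyc).mpr (by linarith)⟩, ?_⟩
    field_simp [hc.ne']
    ring

lemma hasDerivAt_mul_div_one_sub {u : ℝ} (hu : u ≠ 1) :
    HasDerivAt (fun u : ℝ => c * u / (1 - u)) (c / (1 - u) ^ 2) u := by
  have hu' : 1 - u ≠ 0 := sub_ne_zero.mpr hu.symm
  exact (((hasDerivAt_id u).const_mul c).div ((hasDerivAt_id u).const_sub 1) hu').congr_deriv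
    (by simp only [id]; ring)

lemma strictMonoOn_mul_div_one_sub (hc : 0 < c) :
    StrictMonoOn (fun u : ℝ => c * u / (1 - u)) (Iio 1) := by
  intro u (hu : u < 1) v (hv : v < 1) huv
  rw [div_lt_div_iff₀ (by linarith) (by linarith)]
  nlinarith

lemma abs_deriv_smul_rpow_mul_add_rpow (hc : 0 < c) {u : ℝ} (hu : u ∈ Ioo 0 1) :
    |c / (1 - u) ^ 2| • ((c * u / (1 - u)) ^ a * (c * u / (1 - u) + c) ^ b)
      = c ^ (a + b + 1) * (u ^ ((a + 1) - 1) * (1 - u) ^ ((-a - b - 1) - 1)) := by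
  obtain ⟨hu0, hu1⟩ := hu
  have hw : 0 < 1 - u := by linarith
  have hsum : c * u / (1 - u) + c = c / (1 - u) := by field_simp; ring
  rw [smul_eq_mul, hsum, abs_of_pos (by positivity), Real.div_rpow (by positivity) hw.le,
    Real.div_rpow hc.le hw.le, Real.mul_rpow hc.le hu0.le, add_sub_cancel_right,
    show (-a - b - 1) - 1 = -2 + (-a + -b) by ring, Real.rpow_add hw, Real.rpow_add hw,
    Real.rpow_neg hw.le, Real.rpow_neg hw.le, Real.rpow_neg hw.le, Real.rpow_add hc,
    Real.rpow_add hc, Real.rpow_one, Real.rpow_two]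
  field_simp

lemma integrableOn_Ioi_rpow_mul_add_rpow (ha : -1 < a) (hab : a + b < -1) (hc : 0 < c) :
    IntegrableOn (fun y : ℝ => y ^ a * (y + c) ^ b) (Ioi 0) := by
  rw [← image_mul_div_one_sub_Ioo hc, integrableOn_image_iff_integrableOn_abs_deriv_smul
    measurableSet_Ioo (fun u hu => (hasDerivAt_mul_div_one_sub hu.2.ne).hasDerivWithinAt)
    ((strictMonoOn_mul_div_one_sub hc).injOn.mono fun u hu => hu.2)]
  refine IntegrableOn.congr_fun ?_ (fun u hu => (abs_deriv_smul_rpow_mul_add_rpow hc hu).symm)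
    measurableSet_Ioo
  exact ((integrableOn_rpow_mul_one_sub_rpow_s8 (by linarith) (by linarith)).mono_set
    Ioo_subset_Ioc_self).const_mul _

lemma integral_Ioi_rpow_mul_add_rpow (ha : -1 < a) (hab : a + b < -1) (hc : 0 < c) :
    ∫ y in Ioi (0 : ℝ), y ^ a * (y + c) ^ b = eulerBeta (a + 1) (-a - b - 1) * c ^ (a + b + 1) := by
  rw [← image_mul_div_one_sub_Ioo hc, integral_image_eq_integral_abs_deriv_smul
    measurableSet_Ioo (fun u hu => (hasDerivAt_mul_div_one_sub hu.2.ne).hasDerivWithinAt)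
    ((strictMonoOn_mul_div_one_sub hc).injOn.mono fun u hu => hu.2),
    setIntegral_congr_fun measurableSet_Ioo fun u hu => abs_deriv_smul_rpow_mul_add_rpow hc hu,
    integral_const_mul, ← integral_Ioc_eq_integral_Ioo,
    integral_rpow_mul_one_sub_rpow_s8 (by linarith) (by linarith), mul_comm]

end HalfLine

section PosPart

variable {a b s t : ℝ}

lemma posPart_rpow_mul_posPart_rpow_eq_indicator (ha : a ≠ 0) (hst : s ≤ t) (x : ℝ) :
    max (s - x) 0 ^ a * max (t - x) 0 ^ b
      = (Ioi 0).indicator (fun y : ℝ => y ^ a * (y + (t - s)) ^ b) (s - x) := by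
  rcases lt_or_ge 0 (s - x) with hx | hx
  · rw [indicator_of_mem (mem_Ioi.mpr hx), max_eq_left hx.le, max_eq_left (by linarith),
      sub_add_sub_cancel']
  · rw [indicator_of_notMem (notMem_Ioi.mpr hx), max_eq_right hx, Real.zero_rpow ha, zero_mul]

lemma integrable_posPart_rpow_mul_posPart_rpow (ha : -1 < a) (ha0 : a ≠ 0) (hab : a + b < -1)
    (hst : s < t) :
    Integrable (fun x : ℝ => max (s - x) 0 ^ a * max (t - x) 0 ^ b) := by
  simp_rw [posPart_rpow_mul_posPart_rpow_eq_indicator ha0 hst.le]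
  exact ((integrableOn_Ioi_rpow_mul_add_rpow ha hab (sub_pos.mpr hst)).integrable_indicator
    measurableSet_Ioi).comp_sub_left s

lemma integral_posPart_rpow_mul_posPart_rpow_s8 (ha : -1 < a) (ha0 : a ≠ 0) (hab : a + b < -1)
    (hst : s < t) :
    ∫ x : ℝ, max (s - x) 0 ^ a * max (t - x) 0 ^ b
      = eulerBeta (a + 1) (-a - b - 1) * (t - s) ^ (a + b + 1) := by
  simp_rw [posPart_rpow_mul_posPart_rpow_eq_indicator ha0 hst.le]
  rw [integral_sub_left_eq_self (fun y => (Ioi 0).indicator _ y) volume s,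
    integral_indicator measurableSet_Ioi,
    integral_Ioi_rpow_mul_add_rpow ha hab (sub_pos.mpr hst)]

end PosPart

section Cycle

variable (γ : Fin 2 → ℝ) (s₁ s₂ s₃ : ℝ) (σ : Fin 3 → Fin 2)

noncomputable def rosenblattCycleFactor : Fin 3 → ℝ → ℝ :=
  ![fun x => max (s₁ - x) 0 ^ γ (σ 0) * max (s₃ - x) 0 ^ γ (σ 2).rev,
    fun x => max (s₁ - x) 0 ^ γ (σ 0).rev * max (s₂ - x) 0 ^ γ (σ 1),
    fun x => max (s₂ - x) 0 ^ γ (σ 1).rev * max (s₃ - x) 0 ^ γ (σ 2)]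

lemma genRosenblattKernel_cycle_eq_sum (A γ₁ γ₂ : ℝ) (x : Fin 3 → ℝ) :
    genRosenblattKernel A γ₁ γ₂ (s₁ - x 0) (s₁ - x 1) *
        genRosenblattKernel A γ₁ γ₂ (s₂ - x 1) (s₂ - x 2) *
          genRosenblattKernel A γ₁ γ₂ (s₃ - x 2) (s₃ - x 0)
      = (A / 2) ^ 3 * ∑ σ : Fin 3 → Fin 2,
          ∏ i, rosenblattCycleFactor ![γ₁, γ₂] s₁ s₂ s₃ σ i (x i) := by
  set γ := ![γ₁, γ₂]
  have hexpand : ∑ σ : Fin 3 → Fin 2, ∏ i, rosenblattCycleFactor γ s₁ s₂ s₃ σ i (x i)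
      = ∏ k : Fin 3, ∑ j : Fin 2,
          ![max (s₁ - x 0) 0 ^ γ j * max (s₁ - x 1) 0 ^ γ j.rev,
            max (s₂ - x 1) 0 ^ γ j * max (s₂ - x 2) 0 ^ γ j.rev,
            max (s₃ - x 2) 0 ^ γ j * max (s₃ - x 0) 0 ^ γ j.rev] k := by
    rw [Fintype.prod_sum]
    refine Finset.sum_congr rfl fun σ _ => ?_
    simp only [rosenblattCycleFactor, Fin.prod_univ_three, Matrix.cons_val_zero,
      Matrix.cons_val_one, Matrix.cons_val_two, Matrix.head_cons, Matrix.tail_cons]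
    ring
  rw [hexpand, Fin.prod_univ_three]
  simp only [genRosenblattKernel_eq_sum, Matrix.cons_val_zero, Matrix.cons_val_one,
    Matrix.cons_val_two, Matrix.head_cons, Matrix.tail_cons]
  ring

variable {γ} (hγ : ∀ i, γ i ∈ Ioo (-1) (-1 / 2)) {s₁ s₂ s₃} (hs₁₂ : s₁ < s₂) (hs₂₃ : s₂ < s₃)
include hγ hs₁₂ hs₂₃

lemma integrable_rosenblattCycleFactor (i : Fin 3) :
    Integrable (rosenblattCycleFactor γ s₁ s₂ s₃ σ i) := by
  have hlt := fun i j => (show γ i + γ j < -1 by linarith [(hγ i).2, (hγ j).2])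
  have hne := fun i => (show γ i ≠ 0 by linarith [(hγ i).2])
  fin_cases i
  · exact integrable_posPart_rpow_mul_posPart_rpow (hγ _).1 (hne _) (hlt _ _) (hs₁₂.trans hs₂₃)
  · exact integrable_posPart_rpow_mul_posPart_rpow (hγ _).1 (hne _) (hlt _ _) hs₁₂
  · exact integrable_posPart_rpow_mul_posPart_rpow (hγ _).1 (hne _) (hlt _ _) hs₂₃

lemma prod_integral_rosenblattCycleFactor :
    ∏ i, ∫ x, rosenblattCycleFactor γ s₁ s₂ s₃ σ i x
      = eulerBeta (γ (σ 0) + 1) (-γ (σ 2).rev - γ (σ 0) - 1) *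
          eulerBeta (γ (σ 0).rev + 1) (-γ (σ 0).rev - γ (σ 1) - 1) *
          eulerBeta (γ (σ 1).rev + 1) (-γ (σ 1).rev - γ (σ 2) - 1) *
          (s₃ - s₁) ^ (γ (σ 2).rev + γ (σ 0) + 1) *
          (s₂ - s₁) ^ (γ (σ 0).rev + γ (σ 1) + 1) *
          (s₃ - s₂) ^ (γ (σ 1).rev + γ (σ 2) + 1) := by
  have hlt := fun i j => (show γ i + γ j < -1 by linarith [(hγ i).2, (hγ j).2])
  have hne := fun i => (show γ i ≠ 0 by linarith [(hγ i).2])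
  rw [Fin.prod_univ_three]
  simp only [rosenblattCycleFactor, Matrix.cons_val_zero, Matrix.cons_val_one, Matrix.cons_val_two,
    Matrix.head_cons, Matrix.tail_cons]
  rw [integral_posPart_rpow_mul_posPart_rpow_s8 (hγ _).1 (hne _) (hlt _ _) (hs₁₂.trans hs₂₃),
    integral_posPart_rpow_mul_posPart_rpow_s8 (hγ _).1 (hne _) (hlt _ _) hs₁₂,
    integral_posPart_rpow_mul_posPart_rpow_s8 (hγ _).1 (hne _) (hlt _ _) hs₂₃]
  ring_nf

end Cycle

theorem circular_integral_three_general
    (γ₁ γ₂ : ℝ) (h1 : γ₁ ∈ Set.Ioo (-1 : ℝ) (-1/2)) (h2 : γ₂ ∈ Set.Ioo (-1 : ℝ) (-1/2))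
    (A : ℝ) (s₁ s₂ s₃ : ℝ) (hs12 : s₁ < s₂) (hs23 : s₂ < s₃) :
    (∫ x : Fin 3 → ℝ,
        genRosenblattKernel A γ₁ γ₂ (s₁ - x 0) (s₁ - x 1) *
          genRosenblattKernel A γ₁ γ₂ (s₂ - x 1) (s₂ - x 2) *
            genRosenblattKernel A γ₁ γ₂ (s₃ - x 2) (s₃ - x 0))
      = (A / 2) ^ 3 *
          ∑ σ : Fin 3 → Fin 2,
            eulerBeta (![γ₁, γ₂] (σ 0) + 1)
                (-(![γ₁, γ₂] ((σ 2).rev)) - ![γ₁, γ₂] (σ 0) - 1) *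
              eulerBeta (![γ₁, γ₂] ((σ 0).rev) + 1)
                (-(![γ₁, γ₂] ((σ 0).rev)) - ![γ₁, γ₂] (σ 1) - 1) *
              eulerBeta (![γ₁, γ₂] ((σ 1).rev) + 1)
                (-(![γ₁, γ₂] ((σ 1).rev)) - ![γ₁, γ₂] (σ 2) - 1) *
              (s₃ - s₁) ^ (![γ₁, γ₂] ((σ 2).rev) + ![γ₁, γ₂] (σ 0) + 1) *
              (s₂ - s₁) ^ (![γ₁, γ₂] ((σ 0).rev) + ![γ₁, γ₂] (σ 1) + 1) *
              (s₃ - s₂) ^ (![γ₁, γ₂] ((σ 1).rev) + ![γ₁, γ₂] (σ 2) + 1) := by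
  have hγ : ∀ i, ![γ₁, γ₂] i ∈ Ioo (-1) (-1 / 2) := fun i => by fin_cases i <;> assumption
  have hint (σ : Fin 3 → Fin 2) : Integrable fun x : Fin 3 → ℝ =>
      ∏ i, rosenblattCycleFactor ![γ₁, γ₂] s₁ s₂ s₃ σ i (x i) :=
    Integrable.fintype_prod (integrable_rosenblattCycleFactor σ hγ hs12 hs23)
  simp_rw [genRosenblattKernel_cycle_eq_sum, integral_const_mul]
  rw [integral_finsetSum _ fun σ _ => hint σ]
  simp_rw [integral_fintype_prod_volume_eq_prod, prod_integral_rosenblattCycleFactor _ hγ hs12 hs23]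

/-- For `s₁ < s₂ < s₃`, `∫_{ℝ³} g(s₁-x₁,s₁-x₂) g(s₂-x₂,s₂-x₃) g(s₃-x₃,s₃-x₁) dx
  = (A/2)³ Σ_{σ∈{1,2}³} B(γ_{σ₁}+1,-γ_{σ₃'}-γ_{σ₁}-1) B(γ_{σ₁'}+1,-γ_{σ₁'}-γ_{σ₂}-1)
      B(γ_{σ₂'}+1,-γ_{σ₂'}-γ_{σ₃}-1) (s₃-s₁)^{γ_{σ₃'}+γ_{σ₁}+1} (s₂-s₁)^{γ_{σ₁'}+γ_{σ₂}+1}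
      (s₃-s₂)^{γ_{σ₂'}+γ_{σ₃}+1}`,
where the sum ranges over maps `σ : Fin 3 → Fin 2` (values indexing `γ = ![γ₁, γ₂]`)
and the complement `σ'` is given by `Fin.rev`. -/
theorem circular_integral_three
    (γ₁ γ₂ : ℝ) (h1 : γ₁ ∈ Set.Ioo (-1 : ℝ) (-1/2)) (h2 : γ₂ ∈ Set.Ioo (-1 : ℝ) (-1/2))
    (hsum : γ₁ + γ₂ > -3/2) (A : ℝ) (s₁ s₂ s₃ : ℝ) (hs12 : s₁ < s₂) (hs23 : s₂ < s₃) :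
    (∫ x : Fin 3 → ℝ,
        genRosenblattKernel A γ₁ γ₂ (s₁ - x 0) (s₁ - x 1) *
          genRosenblattKernel A γ₁ γ₂ (s₂ - x 1) (s₂ - x 2) *
            genRosenblattKernel A γ₁ γ₂ (s₃ - x 2) (s₃ - x 0))
      = (A / 2) ^ 3 *
          ∑ σ : Fin 3 → Fin 2,
            eulerBeta (![γ₁, γ₂] (σ 0) + 1)
                (-(![γ₁, γ₂] ((σ 2).rev)) - ![γ₁, γ₂] (σ 0) - 1) *
              eulerBeta (![γ₁, γ₂] ((σ 0).rev) + 1)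
                (-(![γ₁, γ₂] ((σ 0).rev)) - ![γ₁, γ₂] (σ 1) - 1) *
              eulerBeta (![γ₁, γ₂] ((σ 1).rev) + 1)
                (-(![γ₁, γ₂] ((σ 1).rev)) - ![γ₁, γ₂] (σ 2) - 1) *
              (s₃ - s₁) ^ (![γ₁, γ₂] ((σ 2).rev) + ![γ₁, γ₂] (σ 0) + 1) *
              (s₂ - s₁) ^ (![γ₁, γ₂] ((σ 0).rev) + ![γ₁, γ₂] (σ 1) + 1) *
              (s₃ - s₂) ^ (![γ₁, γ₂] ((σ 1).rev) + ![γ₁, γ₂] (σ 2) + 1) :=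
  circular_integral_three_general γ₁ γ₂ h1 h2 A s₁ s₂ s₃ hs12 hs23
end

section
/- Let γ₁, γ₂ ∈ (-1, -1/2) with γ₁ + γ₂ > -3/2, let A ≠ 0, and define g(x,y) = (A/2)·(x₊^{γ₁} y₊^{γ₂} + x₊^{γ₂} y₊^{γ₁}). Then g satisfies the second defining property of a generalized Hermite kernel: ∫_{(0,∞)²} |g(1+x₁, 1+x₂) · g(x₁, x₂)| dx₁dx₂ < ∞. -/
open MeasureTheory

/-- Auxiliary: `(1+x)^a * x^c` is integrable on `(0,∞)` when `a, c ∈ (-1, -1/2)`. -/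
lemma aux_integrable (a c : ℝ) (ha1 : -1 < a) (ha2 : a < -1/2) (hc1 : -1 < c) (hc2 : c < -1/2) :
    IntegrableOn (fun x : ℝ => (1 + x) ^ a * x ^ c) (Set.Ioi 0) := by
  have hmeas : AEStronglyMeasurable (fun x : ℝ => (1 + x) ^ a * x ^ c)
      (volume.restrict (Set.Ioi (0:ℝ))) := by
    apply Measurable.aestronglyMeasurable
    fun_prop
  have h01 : IntegrableOn (fun x : ℝ => (1 + x) ^ a * x ^ c) (Set.Ioc 0 1) := by
    have hbase : IntegrableOn (fun x : ℝ => x ^ c) (Set.Ioc 0 1) :=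
      (intervalIntegral.intervalIntegrable_rpow' hc1 (a := 0) (b := 1)).1
    refine Integrable.mono' hbase (hmeas.mono_measure
      (Measure.restrict_mono Set.Ioc_subset_Ioi_self le_rfl)) ?_
    filter_upwards [ae_restrict_mem measurableSet_Ioc] with x hx
    have hx0 : 0 < x := hx.1
    have h1 : (1 + x) ^ a ≤ 1 :=
      Real.rpow_le_one_of_one_le_of_nonpos (by linarith) (by linarith)
    have h2 : (0:ℝ) ≤ (1 + x) ^ a := Real.rpow_nonneg (by linarith) a
    have h3 : (0:ℝ) ≤ x ^ c := Real.rpow_nonneg hx0.le c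
    rw [Real.norm_eq_abs, abs_of_nonneg (mul_nonneg h2 h3)]
    nlinarith
  have h1i : IntegrableOn (fun x : ℝ => (1 + x) ^ a * x ^ c) (Set.Ioi 1) := by
    have hbase : IntegrableOn (fun x : ℝ => x ^ (a + c)) (Set.Ioi 1) :=
      integrableOn_Ioi_rpow_of_lt (by linarith) one_pos
    refine Integrable.mono' hbase (hmeas.mono_measure
      (Measure.restrict_mono (Set.Ioi_subset_Ioi zero_le_one) le_rfl)) ?_
    filter_upwards [ae_restrict_mem measurableSet_Ioi] with x hx
    have hx1 : (1:ℝ) < x := hx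
    have hx0 : 0 < x := lt_trans one_pos hx1
    have h1 : (1 + x) ^ a ≤ x ^ a :=
      Real.rpow_le_rpow_of_nonpos hx0 (by linarith) (by linarith)
    have h2 : (0:ℝ) ≤ (1 + x) ^ a := Real.rpow_nonneg (by linarith) a
    have h3 : (0:ℝ) ≤ x ^ c := Real.rpow_nonneg hx0.le c
    have h4 : (0:ℝ) ≤ x ^ a := Real.rpow_nonneg hx0.le a
    rw [Real.norm_eq_abs, abs_of_nonneg (mul_nonneg h2 h3), Real.rpow_add hx0]
    nlinarith
  have : Set.Ioc (0:ℝ) 1 ∪ Set.Ioi 1 = Set.Ioi 0 := Set.Ioc_union_Ioi_eq_Ioi zero_le_one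
  rw [← this]
  exact h01.union h1i

/-- The generalized Rosenblatt kernel satisfies the second defining property of a
generalized Hermite kernel: `∫_{(0,∞)²} |g(1+x₁,1+x₂) g(x₁,x₂)| dx₁ dx₂ < ∞`. -/
theorem genRosenblattKernel_integrability_property
    (γ₁ γ₂ : ℝ) (h1 : γ₁ ∈ Set.Ioo (-1 : ℝ) (-1/2)) (h2 : γ₂ ∈ Set.Ioo (-1 : ℝ) (-1/2))
    (hsum : γ₁ + γ₂ > -3/2) (A : ℝ) (hA : A ≠ 0) :
    IntegrableOn
      (fun p : ℝ × ℝ =>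
        |genRosenblattKernel A γ₁ γ₂ (1 + p.1) (1 + p.2) *
          genRosenblattKernel A γ₁ γ₂ p.1 p.2|)
      (Set.Ioi 0 ×ˢ Set.Ioi 0) := by
  obtain ⟨h11, h12⟩ := h1
  obtain ⟨h21, h22⟩ := h2
  have prodInt : ∀ a c b d : ℝ, -1 < a → a < -1/2 → -1 < c → c < -1/2 →
      -1 < b → b < -1/2 → -1 < d → d < -1/2 →
      IntegrableOn (fun p : ℝ × ℝ => (1 + p.1) ^ a * p.1 ^ c * ((1 + p.2) ^ b * p.2 ^ d))
        (Set.Ioi 0 ×ˢ Set.Ioi 0) := by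
    intro a c b d ha1 ha2 hc1 hc2 hb1 hb2 hd1 hd2
    rw [IntegrableOn, Measure.volume_eq_prod, ← Measure.prod_restrict]
    exact (aux_integrable a c ha1 ha2 hc1 hc2).mul_prod (aux_integrable b d hb1 hb2 hd1 hd2)
  have hF : IntegrableOn
      (fun p : ℝ × ℝ => (A/2)^2 *
        ((1 + p.1) ^ γ₁ * p.1 ^ γ₁ * ((1 + p.2) ^ γ₂ * p.2 ^ γ₂) +
         (1 + p.1) ^ γ₁ * p.1 ^ γ₂ * ((1 + p.2) ^ γ₂ * p.2 ^ γ₁) +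
         (1 + p.1) ^ γ₂ * p.1 ^ γ₁ * ((1 + p.2) ^ γ₁ * p.2 ^ γ₂) +
         (1 + p.1) ^ γ₂ * p.1 ^ γ₂ * ((1 + p.2) ^ γ₁ * p.2 ^ γ₁)))
      (Set.Ioi 0 ×ˢ Set.Ioi 0) := by
    exact ((((prodInt γ₁ γ₁ γ₂ γ₂ h11 h12 h11 h12 h21 h22 h21 h22).add
      (prodInt γ₁ γ₂ γ₂ γ₁ h11 h12 h21 h22 h21 h22 h11 h12)).add
      (prodInt γ₂ γ₁ γ₁ γ₂ h21 h22 h11 h12 h11 h12 h21 h22)).add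
      (prodInt γ₂ γ₂ γ₁ γ₁ h21 h22 h21 h22 h11 h12 h11 h12)).const_mul _
  refine hF.congr_fun ?_ (measurableSet_Ioi.prod measurableSet_Ioi)
  rintro ⟨x, y⟩ ⟨hx, hy⟩
  simp only [Set.mem_Ioi] at hx hy
  have hx1 : (0:ℝ) < 1 + x := by linarith
  have hy1 : (0:ℝ) < 1 + y := by linarith
  simp only [genRosenblattKernel, max_eq_left hx.le, max_eq_left hy.le,
    max_eq_left hx1.le, max_eq_left hy1.le]
  set S := (1 + x) ^ γ₁ * (1 + y) ^ γ₂ + (1 + x) ^ γ₂ * (1 + y) ^ γ₁ with hS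
  set T := x ^ γ₁ * y ^ γ₂ + x ^ γ₂ * y ^ γ₁ with hT
  have hSpos : 0 ≤ S := by
    apply add_nonneg <;> exact mul_nonneg (Real.rpow_nonneg (by linarith) _)
      (Real.rpow_nonneg (by linarith) _)
  have hTpos : 0 ≤ T := by
    apply add_nonneg <;> exact mul_nonneg (Real.rpow_nonneg hx.le _) (Real.rpow_nonneg hy.le _)
  rw [abs_mul, abs_mul, abs_mul, abs_of_nonneg hSpos, abs_of_nonneg hTpos,
    show |A / 2| * S * (|A / 2| * T) = |A/2|^2 * (S * T) by ring, sq_abs]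
  rw [hS, hT]; ring
end

section
/- Let γ₁, γ₂ ∈ (-1, -1/2) with γ₁ + γ₂ > -3/2, let A ∈ ℝ, and define g(x,y) = (A/2)·(x₊^{γ₁} y₊^{γ₂} + x₊^{γ₂} y₊^{γ₁}). Then the function f(x₁,x₂) = ∫₀¹ g(s - x₁, s - x₂) ds is square integrable on ℝ²: ∫_{ℝ²} f(x₁,x₂)² dx₁dx₂ < ∞. -/
/-!
Since `g` symmetrises the kernels `x₊^a y₊^b`, it suffices to bound
`∫ (∫₀¹ (s-x₁)₊^a (s-x₂)₊^b ds)² dx₁ dx₂` for `a, b ∈ {γ₁, γ₂}`. Expanding the square and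
integrating in `(x₁, x₂)` first, the inner integral factors into two covariances
`∫ (s-x)₊^γ (t-x)₊^γ dx ≤ c_γ |s-t|^(2γ+1)`, finite because `γ < -1/2` (split the integral at
distance `|s-t|` from the singularity). What remains is `∫∫_{[0,1]²} |s-t|^(2(a+b)+2) ds dt`,
finite because `a + b > -3/2`. All bounds go through Lebesgue integrals of absolute values, so the
junk value of the Bochner integral on the diagonal `x₁ = x₂`, where the `s`-integral diverges, is
harmless.
-/

open MeasureTheory

open Set
open scoped ENNReal

lemma integrable_sq_integral_of_lintegral_sq_lt_top {α β : Type*} [MeasurableSpace α]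
    [MeasurableSpace β] {μ : Measure α} {ν : Measure β} [SFinite ν] {K : α → β → ℝ}
    (hK : StronglyMeasurable (Function.uncurry K))
    (h : ∫⁻ p, (∫⁻ s, ‖K p s‖ₑ ∂ν) ^ 2 ∂μ < ∞) :
    Integrable (fun p => (∫ s, K p s ∂ν) ^ 2) μ := by
  refine ⟨(hK.integral_prod_right.measurable.pow_const 2).aestronglyMeasurable, ?_⟩
  refine lt_of_le_of_lt (lintegral_mono fun p => ?_) h
  rw [enorm_pow]
  gcongr
  exact enorm_integral_le_lintegral_enorm _

lemma lintegral_add_sq_lt_top {α : Type*} [MeasurableSpace α] {μ : Measure α}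
    {f g : α → ℝ≥0∞} (hf : AEMeasurable f μ) (hf₂ : ∫⁻ p, f p ^ 2 ∂μ < ∞)
    (hg₂ : ∫⁻ p, g p ^ 2 ∂μ < ∞) :
    ∫⁻ p, (f p + g p) ^ 2 ∂μ < ∞ := by
  simp only [← ENNReal.rpow_two] at hf₂ hg₂ ⊢
  exact ENNReal.lintegral_rpow_add_lt_top_of_lintegral_rpow_lt_top hf hf₂ hg₂ one_le_two

lemma lintegral_Ioc_rpow {γ : ℝ} (hγ : -1 < γ) {r : ℝ} (hr : 0 ≤ r) :
    ∫⁻ u in Ioc 0 r, ENNReal.ofReal (u ^ γ) = ENNReal.ofReal (r ^ (γ + 1) / (γ + 1)) := by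
  rw [← ofReal_integral_eq_lintegral_ofReal, ← intervalIntegral.integral_of_le hr,
    integral_rpow (Or.inl hγ), Real.zero_rpow (by linarith), sub_zero]
  · exact (intervalIntegrable_iff_integrableOn_Ioc_of_le hr).mp
      (intervalIntegral.intervalIntegrable_rpow' hγ)
  · exact ae_restrict_of_forall_mem measurableSet_Ioc fun u hu => Real.rpow_nonneg hu.1.le γ

lemma lintegral_Ioi_rpow {γ : ℝ} (hγ : γ < -1) {r : ℝ} (hr : 0 < r) :
    ∫⁻ u in Ioi r, ENNReal.ofReal (u ^ γ) = ENNReal.ofReal (-r ^ (γ + 1) / (γ + 1)) := by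
  rw [← ofReal_integral_eq_lintegral_ofReal (integrableOn_Ioi_rpow_of_lt hγ hr),
    integral_Ioi_rpow_of_lt hγ hr]
  exact ae_restrict_of_forall_mem measurableSet_Ioi fun u hu =>
    Real.rpow_nonneg (hr.trans hu).le γ

lemma lintegral_Icc_abs_rpow_lt_top {α : ℝ} (hα : -1 < α) (a b : ℝ) :
    ∫⁻ u in Icc a b, ENNReal.ofReal (|u| ^ α) < ∞ := by
  have hloc : LocallyIntegrable (fun u : ℝ => |u| ^ α) :=
    locallyIntegrable_of_norm_le_rpow (μ := volume) (C := 1) (α := -α) (by simp)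
      (by simp; linarith)
      (Filter.Eventually.of_forall fun u => by
        simp [Real.norm_eq_abs, abs_of_nonneg (Real.rpow_nonneg (abs_nonneg u) α)])
      (by fun_prop : Measurable fun u : ℝ => |u| ^ α).aestronglyMeasurable
  exact (hloc.integrableOn_isCompact isCompact_Icc).lintegral_lt_top

lemma lintegral_Ioc_abs_sub_rpow_le {α s : ℝ} (hs : s ∈ Icc (0 : ℝ) 1) :
    ∫⁻ t in Ioc 0 1, ENNReal.ofReal (|s - t| ^ α) ≤
      ∫⁻ u in Icc (-1) 1, ENNReal.ofReal (|u| ^ α) := by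
  set g : ℝ → ℝ≥0∞ := (Icc (-1) 1).indicator fun u => ENNReal.ofReal (|u| ^ α)
  calc ∫⁻ t in Ioc 0 1, ENNReal.ofReal (|s - t| ^ α)
      = ∫⁻ t in Ioc 0 1, g (t - s) := by
        refine setLIntegral_congr_fun measurableSet_Ioc fun t ht => ?_
        have hts : t - s ∈ Icc (-1 : ℝ) 1 := ⟨by linarith [ht.1, hs.2], by linarith [ht.2, hs.1]⟩
        rw [show g (t - s) = _ from indicator_of_mem hts _, abs_sub_comm]
    _ ≤ ∫⁻ t, g (t - s) := setLIntegral_le_lintegral _ _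
    _ = ∫⁻ u in Icc (-1) 1, ENNReal.ofReal (|u| ^ α) := by
        rw [lintegral_sub_right_eq_self g s, lintegral_indicator measurableSet_Icc]

lemma lintegral_Ioc_lintegral_Ioc_abs_sub_rpow_lt_top {α : ℝ} (hα : -1 < α) :
    ∫⁻ s in Ioc 0 1, ∫⁻ t in Ioc 0 1, ENNReal.ofReal (|s - t| ^ α) < ∞ := by
  calc ∫⁻ s in Ioc 0 1, ∫⁻ t in Ioc 0 1, ENNReal.ofReal (|s - t| ^ α)
      ≤ ∫⁻ _ in Ioc (0 : ℝ) 1, ∫⁻ u in Icc (-1) 1, ENNReal.ofReal (|u| ^ α) :=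
        setLIntegral_mono' measurableSet_Ioc fun s hs =>
          lintegral_Ioc_abs_sub_rpow_le (Ioc_subset_Icc_self hs)
    _ < ∞ := by
        rw [setLIntegral_const, Real.volume_Ioc]
        exact ENNReal.mul_lt_top (lintegral_Icc_abs_rpow_lt_top hα _ _) ENNReal.ofReal_lt_top

noncomputable def posRpow (γ x : ℝ) : ℝ≥0∞ := ENNReal.ofReal (max x 0 ^ γ)

@[fun_prop]
lemma measurable_posRpow (γ : ℝ) : Measurable (posRpow γ) := by
  unfold posRpow; fun_prop

lemma posRpow_of_nonpos {γ x : ℝ} (hγ : γ ≠ 0) (hx : x ≤ 0) : posRpow γ x = 0 := by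
  simp [posRpow, max_eq_right hx, Real.zero_rpow hγ]

lemma posRpow_of_nonneg {γ x : ℝ} (hx : 0 ≤ x) : posRpow γ x = ENNReal.ofReal (x ^ γ) := by
  rw [posRpow, max_eq_left hx]

lemma posRpow_le_rpow {γ x y : ℝ} (hγ : γ ≤ 0) (hx : 0 < x) (hxy : x ≤ y) :
    posRpow γ y ≤ ENNReal.ofReal (x ^ γ) := by
  rw [posRpow_of_nonneg (hx.le.trans hxy)]
  exact ENNReal.ofReal_le_ofReal (Real.rpow_le_rpow_of_nonpos hx hxy hγ)

lemma enorm_genRosenblattKernel (A γ₁ γ₂ x y : ℝ) :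
    ‖genRosenblattKernel A γ₁ γ₂ x y‖ₑ =
      ‖A / 2‖ₑ * (posRpow γ₁ x * posRpow γ₂ y + posRpow γ₂ x * posRpow γ₁ y) := by
  have hx : ∀ γ : ℝ, 0 ≤ max x 0 ^ γ := fun γ => Real.rpow_nonneg (le_max_right x 0) γ
  have hy : ∀ γ : ℝ, 0 ≤ max y 0 ^ γ := fun γ => Real.rpow_nonneg (le_max_right y 0) γ
  rw [genRosenblattKernel, enorm_mul,
    Real.enorm_of_nonneg (add_nonneg (mul_nonneg (hx _) (hy _)) (mul_nonneg (hx _) (hy _))),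
    ENNReal.ofReal_add (mul_nonneg (hx _) (hy _)) (mul_nonneg (hx _) (hy _)),
    ENNReal.ofReal_mul (hx _), ENNReal.ofReal_mul (hx _)]
  rfl

noncomputable def posRpowCovConst (γ : ℝ) : ℝ := 1 / (γ + 1) - 1 / (2 * γ + 1)

lemma posRpowCovConst_pos {γ : ℝ} (hγ : γ ∈ Ioo (-1) (-1/2)) : 0 < posRpowCovConst γ := by
  have h₁ : 0 < 1 / (γ + 1) := one_div_pos.mpr (by linarith [hγ.1])
  have h₂ : 1 / (2 * γ + 1) < 0 := one_div_neg.mpr (by linarith [hγ.2])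
  unfold posRpowCovConst
  linarith

lemma lintegral_posRpow_mul_posRpow_add_le {γ : ℝ} (hγ : γ ∈ Ioo (-1) (-1/2)) {r : ℝ}
    (hr : 0 < r) :
    ∫⁻ u, posRpow γ u * posRpow γ (u + r) ≤
      ENNReal.ofReal (posRpowCovConst γ * r ^ (2 * γ + 1)) := by
  obtain ⟨hγ₁, hγ₂⟩ := hγ
  have hsupp : (fun u => posRpow γ u * posRpow γ (u + r)).support ⊆ Ioi 0 := by
    intro u hu
    by_contra hu'
    exact hu (by simp [posRpow_of_nonpos (by linarith : γ ≠ 0) (not_lt.mp hu')])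
  have hnear : ∀ u ∈ Ioc 0 r,
      posRpow γ u * posRpow γ (u + r) ≤ ENNReal.ofReal (r ^ γ) * ENNReal.ofReal (u ^ γ) :=
    fun u hu => by
      rw [mul_comm, posRpow_of_nonneg hu.1.le]
      gcongr
      exact posRpow_le_rpow (by linarith) hr (by linarith [hu.1])
  have hfar : ∀ u ∈ Ioi r,
      posRpow γ u * posRpow γ (u + r) ≤ ENNReal.ofReal (u ^ (2 * γ)) :=
    fun u hu => by
      have hu₀ : 0 < u := hr.trans hu
      rw [two_mul, Real.rpow_add hu₀, ENNReal.ofReal_mul (Real.rpow_nonneg hu₀.le γ),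
        posRpow_of_nonneg hu₀.le]
      gcongr
      exact posRpow_le_rpow (by linarith) hu₀ (by linarith)
  rw [← setLIntegral_eq_of_support_subset hsupp, ← Ioc_union_Ioi_eq_Ioi hr.le]
  calc _ ≤ (∫⁻ u in Ioc 0 r, posRpow γ u * posRpow γ (u + r)) +
        ∫⁻ u in Ioi r, posRpow γ u * posRpow γ (u + r) := lintegral_union_le _ _ _
    _ ≤ (∫⁻ u in Ioc 0 r, ENNReal.ofReal (r ^ γ) * ENNReal.ofReal (u ^ γ)) +
        ∫⁻ u in Ioi r, ENNReal.ofReal (u ^ (2 * γ)) :=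
      add_le_add (setLIntegral_mono' measurableSet_Ioc hnear)
        (setLIntegral_mono' measurableSet_Ioi hfar)
    _ = ENNReal.ofReal (r ^ γ) * ENNReal.ofReal (r ^ (γ + 1) / (γ + 1)) +
        ENNReal.ofReal (-r ^ (2 * γ + 1) / (2 * γ + 1)) := by
      rw [lintegral_const_mul' _ _ ENNReal.ofReal_ne_top, lintegral_Ioc_rpow hγ₁ hr.le,
        lintegral_Ioi_rpow (by linarith) hr]
    _ = ENNReal.ofReal (posRpowCovConst γ * r ^ (2 * γ + 1)) := by
      have hnear_nonneg : 0 ≤ r ^ γ * (r ^ (γ + 1) / (γ + 1)) :=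
        mul_nonneg (Real.rpow_nonneg hr.le γ) (div_nonneg (Real.rpow_nonneg hr.le _) (by linarith))
      have hfar_nonneg : 0 ≤ -r ^ (2 * γ + 1) / (2 * γ + 1) :=
        div_nonneg_of_nonpos (by simpa using Real.rpow_nonneg hr.le _) (by linarith)
      have hsplit : r ^ (2 * γ + 1) = r ^ γ * r ^ (γ + 1) := by
        rw [← Real.rpow_add hr]; congr 1; ring
      rw [← ENNReal.ofReal_mul (Real.rpow_nonneg hr.le γ),
        ← ENNReal.ofReal_add hnear_nonneg hfar_nonneg, posRpowCovConst, hsplit]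
      congr 1
      ring

lemma lintegral_posRpow_sub_mul_posRpow_sub_le {γ : ℝ} (hγ : γ ∈ Ioo (-1) (-1/2)) {s t : ℝ}
    (hst : s ≠ t) :
    ∫⁻ x, posRpow γ (s - x) * posRpow γ (t - x) ≤
      ENNReal.ofReal (posRpowCovConst γ * |s - t| ^ (2 * γ + 1)) := by
  wlog hlt : s < t generalizing s t
  · simpa only [mul_comm, abs_sub_comm] using
      this hst.symm ((not_lt.mp hlt).lt_of_ne hst.symm)
  calc ∫⁻ x, posRpow γ (s - x) * posRpow γ (t - x)
      = ∫⁻ u, posRpow γ u * posRpow γ (u + (t - s)) := by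
        rw [← lintegral_sub_left_eq_self _ s]
        congr 1 with u
        rw [sub_sub_cancel, show t - (s - u) = u + (t - s) by ring]
    _ ≤ ENNReal.ofReal (posRpowCovConst γ * |s - t| ^ (2 * γ + 1)) := by
        rw [abs_sub_comm, abs_of_pos (sub_pos.mpr hlt)]
        exact lintegral_posRpow_mul_posRpow_add_le hγ (sub_pos.mpr hlt)

lemma lintegral_prod_posRpow_mul_le {a b : ℝ} (ha : a ∈ Ioo (-1) (-1/2))
    (hb : b ∈ Ioo (-1) (-1/2)) {s t : ℝ} (hst : s ≠ t) :
    ∫⁻ p : ℝ × ℝ, (posRpow a (s - p.1) * posRpow b (s - p.2)) *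
        (posRpow a (t - p.1) * posRpow b (t - p.2)) ≤
      ENNReal.ofReal (posRpowCovConst a * posRpowCovConst b) *
        ENNReal.ofReal (|s - t| ^ (2 * (a + b) + 2)) := by
  have hd : 0 < |s - t| := abs_pos.mpr (sub_ne_zero.mpr hst)
  have hca := (posRpowCovConst_pos ha).le
  have hcb := (posRpowCovConst_pos hb).le
  calc ∫⁻ p : ℝ × ℝ, (posRpow a (s - p.1) * posRpow b (s - p.2)) *
        (posRpow a (t - p.1) * posRpow b (t - p.2))
      = ∫⁻ p : ℝ × ℝ, (posRpow a (s - p.1) * posRpow a (t - p.1)) *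
          (posRpow b (s - p.2) * posRpow b (t - p.2)) ∂(volume.prod volume) := by
        rw [Measure.volume_eq_prod]
        exact lintegral_congr fun p => mul_mul_mul_comm _ _ _ _
    _ = (∫⁻ x, posRpow a (s - x) * posRpow a (t - x)) *
          ∫⁻ y, posRpow b (s - y) * posRpow b (t - y) :=
        lintegral_prod_mul
          (by fun_prop : Measurable fun x => posRpow a (s - x) * posRpow a (t - x)).aemeasurable
          (by fun_prop : Measurable fun y => posRpow b (s - y) * posRpow b (t - y)).aemeasurable
    _ ≤ ENNReal.ofReal (posRpowCovConst a * |s - t| ^ (2 * a + 1)) *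
          ENNReal.ofReal (posRpowCovConst b * |s - t| ^ (2 * b + 1)) :=
        mul_le_mul' (lintegral_posRpow_sub_mul_posRpow_sub_le ha hst)
          (lintegral_posRpow_sub_mul_posRpow_sub_le hb hst)
    _ = ENNReal.ofReal (posRpowCovConst a * posRpowCovConst b) *
          ENNReal.ofReal (|s - t| ^ (2 * (a + b) + 2)) := by
        have hsplit :
            |s - t| ^ (2 * (a + b) + 2) = |s - t| ^ (2 * a + 1) * |s - t| ^ (2 * b + 1) := by
          rw [← Real.rpow_add hd]; congr 1; ring
        rw [← ENNReal.ofReal_mul (mul_nonneg hca (Real.rpow_nonneg hd.le _)),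
          ← ENNReal.ofReal_mul (mul_nonneg hca hcb), hsplit]
        congr 1
        ring

lemma lintegral_sq_lintegral_posRpow_mul_lt_top {a b : ℝ} (ha : a ∈ Ioo (-1) (-1/2))
    (hb : b ∈ Ioo (-1) (-1/2)) (hab : -3/2 < a + b) :
    ∫⁻ p : ℝ × ℝ, (∫⁻ s in Ioc 0 1, posRpow a (s - p.1) * posRpow b (s - p.2)) ^ 2 < ∞ := by
  set G : ℝ → ℝ × ℝ → ℝ≥0∞ := fun s p => posRpow a (s - p.1) * posRpow b (s - p.2)
  have hG : ∀ p, Measurable fun s => G s p := fun p => by unfold G; fun_prop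
  calc ∫⁻ p, (∫⁻ s in Ioc 0 1, G s p) ^ 2
      = ∫⁻ p, ∫⁻ s in Ioc 0 1, ∫⁻ t in Ioc 0 1, G s p * G t p := by
        refine lintegral_congr fun p => ?_
        rw [sq, lintegral_lintegral_mul (hG p).aemeasurable (hG p).aemeasurable]
    _ = ∫⁻ s in Ioc 0 1, ∫⁻ t in Ioc 0 1, ∫⁻ p, G s p * G t p := by
        rw [lintegral_lintegral_swap (by unfold G; fun_prop)]
        exact lintegral_congr fun s => lintegral_lintegral_swap (by unfold G; fun_prop)
    _ ≤ ∫⁻ s in Ioc 0 1, ∫⁻ t in Ioc 0 1,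
          ENNReal.ofReal (posRpowCovConst a * posRpowCovConst b) *
            ENNReal.ofReal (|s - t| ^ (2 * (a + b) + 2)) :=
        lintegral_mono fun s => lintegral_mono_ae <|
          (Measure.ae_ne _ s).mono fun t hts => lintegral_prod_posRpow_mul_le ha hb hts.symm
    _ < ∞ := by
        simp only [lintegral_const_mul' _ _ ENNReal.ofReal_ne_top]
        exact ENNReal.mul_lt_top ENNReal.ofReal_lt_top
          (lintegral_Ioc_lintegral_Ioc_abs_sub_rpow_lt_top (by linarith))

/-- The function `f(x₁,x₂) = ∫₀¹ g(s-x₁, s-x₂) ds` is square integrable on `ℝ²`: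
`∫_{ℝ²} f(x₁,x₂)² dx₁ dx₂ < ∞`. -/
theorem genRosenblattKernel_time_integral_memL2
    (γ₁ γ₂ : ℝ) (h1 : γ₁ ∈ Set.Ioo (-1 : ℝ) (-1/2)) (h2 : γ₂ ∈ Set.Ioo (-1 : ℝ) (-1/2))
    (hsum : γ₁ + γ₂ > -3/2) (A : ℝ) :
    Integrable
      (fun p : ℝ × ℝ =>
        (∫ s in (0 : ℝ)..1, genRosenblattKernel A γ₁ γ₂ (s - p.1) (s - p.2)) ^ 2) := by
  simp only [intervalIntegral.integral_of_le zero_le_one]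
  have hK : Measurable (Function.uncurry fun (p : ℝ × ℝ) (s : ℝ) =>
      genRosenblattKernel A γ₁ γ₂ (s - p.1) (s - p.2)) := by
    unfold genRosenblattKernel; fun_prop
  refine integrable_sq_integral_of_lintegral_sq_lt_top (μ := volume)
    (ν := volume.restrict (Ioc 0 1)) hK.stronglyMeasurable ?_
  have hterm (a b : ℝ) (p : ℝ × ℝ) :
      Measurable fun s => posRpow a (s - p.1) * posRpow b (s - p.2) := by
    fun_prop
  simp only [enorm_genRosenblattKernel, lintegral_const_mul' _ _ enorm_ne_top,
    lintegral_add_left (hterm _ _ _), mul_pow]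
  rw [lintegral_const_mul' _ _ (by finiteness)]
  exact ENNReal.mul_lt_top (by finiteness) (lintegral_add_sq_lt_top (by fun_prop)
    (lintegral_sq_lintegral_posRpow_mul_lt_top h1 h2 (by linarith))
    (lintegral_sq_lintegral_posRpow_mul_lt_top h2 h1 (by linarith)))
end
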